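/- Let λ ∈ Γ_k and let integers k, l, r, s satisfy k > l ≥ 0, r > s ≥ 0, k ≥ r, l ≥ s, and (k,l) ≠ (r,s). Then equality holds in the generalized Newton–Maclaurin inequality ( (σ_k(λ)/C_n^k)/(σ_l(λ)/C_n^l) )^{1/(k−l)} ≤ ( (σ_r(λ)/C_n^r)/(σ_s(λ)/C_n^s) )^{1/(r−s)} if and only if λ_1 = λ_2 = ⋯ = λ_n > 0. -/

import Mathlib

open Finset

/-- The `k`-th elementary symmetric function of the entries of `lam` indexed by `s`. -/
noncomputable def esymmOn {n : ℕ} (s : Finset (Fin n)) (k : ℕ) (lam : Fin n → ℝ) : ℝ :=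
  ∑ S ∈ s.powersetCard k, ∏ i ∈ S, lam i

/-- `σ_k(λ)`. -/
noncomputable def esymm {n : ℕ} (k : ℕ) (lam : Fin n → ℝ) : ℝ :=
  esymmOn Finset.univ k lam

/-- `σ_k(λ|i)`: the `k`-th elementary symmetric function with the `i`-th entry deleted. -/
noncomputable def esymmDel {n : ℕ} (i : Fin n) (k : ℕ) (lam : Fin n → ℝ) : ℝ :=
  esymmOn (Finset.univ.erase i) k lam

/-- `σ_k(λ|ij)`: the `k`-th elementary symmetric function with the `i`-th and `j`-th
entries deleted. -/
noncomputable def esymmDel2 {n : ℕ} (i j : Fin n) (k : ℕ) (lam : Fin n → ℝ) : ℝ :=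
  esymmOn ((Finset.univ.erase i).erase j) k lam

/-- The Gårding cone `Γ_k`: all `λ` with `σ_i(λ) > 0` for `1 ≤ i ≤ k`. -/
def GardingCone (n k : ℕ) : Set (Fin n → ℝ) :=
  {lam | ∀ i : ℕ, 1 ≤ i → i ≤ k → 0 < esymm i lam}

/-!
Write `E_j = σ_j(λ) / C_n^j`. By Rolle's theorem the derivative of a real-rooted real polynomial
is real-rooted, and so is its reversal. Differentiating `∏ (X + λ_i)`, reversing, and
differentiating again leads to a quadratic polynomial whose coefficients are proportional to
`E_{j+2}, 2 E_{j+1}, E_j`, and whose two roots are distinct unless all `λ_i` coincide. Its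
positive discriminant is Newton's strict inequality `E_j E_{j+2} < E_{j+1}²`.

On `Γ_k` all `E_j` with `j ≤ k` are positive, so `log E` is strictly concave on `[0, k]`. The two
sides of the inequality are the exponentials of the slopes of the chords of `log E` over `[l, k]`
and `[s, r]`, and the chord slopes of a strictly concave sequence strictly decrease as either
endpoint moves right. Hence equality forces `λ` to be constant.
-/

open Polynomial

namespace Polynomial

section Field

variable {K : Type*} [Field K]

theorem Splits.reverse {p : K[X]} (hp : p.Splits) : p.reverse.Splits := by
  induction hp using Submonoid.closure_induction with
  | mem q hq =>
    rcases hq with ⟨a, rfl⟩ | ⟨a, rfl⟩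
    · simp [Splits.C]
    · exact Splits.of_natDegree_le_one ((reverse_natDegree_le _).trans (natDegree_X_add_C a).le)
  | one => rw [← C_1, reverse_C]; exact Splits.C 1
  | mul q r _ _ hq hr => simpa [reverse_mul_of_domain] using hq.mul hr

theorem IsRoot.reverse_inv {p : K[X]} {x : K} (hx : p.IsRoot x) (hx0 : x ≠ 0) :
    p.reverse.IsRoot x⁻¹ := by
  let := invertibleOfNonzero hx0
  simpa [IsRoot, ← invOf_eq_inv, eval₂_id] using
    (eval₂_reverse_eq_zero_iff (RingHom.id K) x p).2 hx

theorem two_le_card_roots_toFinset_reverse [DecidableEq K] {p : K[X]} (h0 : p.coeff 0 ≠ 0)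
    (h2 : 2 ≤ #p.roots.toFinset) : 2 ≤ #p.reverse.roots.toFinset := by
  have hp : p ≠ 0 := fun h => h0 (by simp [h])
  have hrev : p.reverse ≠ 0 := by rwa [Ne, reverse_eq_zero]
  have hsub : p.roots.toFinset.image (·⁻¹) ⊆ p.reverse.roots.toFinset := by
    intro y hy
    obtain ⟨x, hx, rfl⟩ := mem_image.1 hy
    rw [Multiset.mem_toFinset, mem_roots hp] at hx
    have hx0 : x ≠ 0 := by rintro rfl; exact h0 (by simpa [coeff_zero_eq_eval_zero] using hx)
    rw [Multiset.mem_toFinset, mem_roots hrev]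
    exact hx.reverse_inv hx0
  calc 2 ≤ #p.roots.toFinset := h2
    _ = #(p.roots.toFinset.image (·⁻¹)) := (card_image_of_injective _ inv_injective).symm
    _ ≤ _ := card_le_card hsub

theorem coeff_reverse_div_choose (p : K[X]) {j : ℕ} (hj : j ≤ p.natDegree) :
    p.reverse.coeff j / p.natDegree.choose j
      = p.coeff (p.natDegree - j) / p.natDegree.choose (p.natDegree - j) := by
  rw [coeff_reverse, revAt_le hj, Nat.choose_symm hj]

theorem coeff_derivative_div_choose [CharZero K] (p : K[X]) (N j : ℕ) :
    p.derivative.coeff j / N.choose j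
      = (N + 1) * (p.coeff (j + 1) / (N + 1).choose (j + 1)) := by
  rcases le_or_gt j N with hj | hj
  · have hchoose : ((N + 1 : ℕ) : K) * N.choose j = (N + 1).choose (j + 1) * (j + 1 : ℕ) := by
      exact_mod_cast Nat.add_one_mul_choose_eq N j
    have h1 : (N.choose j : K) ≠ 0 := by exact_mod_cast (Nat.choose_pos hj).ne'
    have h2 : ((N + 1).choose (j + 1) : K) ≠ 0 := by
      exact_mod_cast (Nat.choose_pos (by omega)).ne'
    rw [coeff_derivative, mul_div_assoc', div_eq_div_iff h1 h2]
    push_cast at hchoose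
    linear_combination -p.coeff (j + 1) * hchoose
  · simp [Nat.choose_eq_zero_of_lt hj, Nat.choose_eq_zero_of_lt (Nat.add_lt_add_right hj 1)]

theorem coeff_iterate_derivative_div_choose [CharZero K] (p : K[X]) (N d j : ℕ) :
    (derivative^[d] p).coeff j / N.choose j
      = (N + d).descFactorial d * (p.coeff (j + d) / (N + d).choose (j + d)) := by
  induction d generalizing p with
  | zero => simp
  | succ d ih =>
    rw [Function.iterate_succ_apply, ih, coeff_derivative_div_choose,
      ← add_assoc, ← add_assoc, Nat.succ_descFactorial_succ]
    push_cast
    ring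

theorem discrim_pos_of_two_le_card_roots [LinearOrder K] [IsStrictOrderedRing K] {q : K[X]}
    (hdeg : q.natDegree = 2) (h2 : 2 ≤ #q.roots.toFinset) :
    0 < discrim (q.coeff 2) (q.coeff 1) (q.coeff 0) := by
  obtain ⟨x, hx, y, hy, hxy⟩ := one_lt_card.1 h2
  have hq : q ≠ 0 := by rintro rfl; simp at hdeg
  have heval (z : K) : q.eval z = q.coeff 2 * (z * z) + q.coeff 1 * z + q.coeff 0 := by
    rw [eval_eq_sum_range, hdeg]
    simp only [sum_range_succ, range_zero, sum_empty, pow_zero, pow_one]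
    ring
  rw [Multiset.mem_toFinset, mem_roots hq, IsRoot, heval] at hx hy
  have ha : q.coeff 2 ≠ 0 := by
    rw [← hdeg]
    exact leadingCoeff_ne_zero.2 hq
  -- Vieta: `b = -a (x + y)`, hence `b² - 4ac = (a (x - y))²`
  have hb : q.coeff 1 = -q.coeff 2 * (x + y) := by
    refine mul_left_cancel₀ (sub_ne_zero.2 hxy) ?_
    linear_combination hx - hy
  have hdisc : discrim (q.coeff 2) (q.coeff 1) (q.coeff 0) = (q.coeff 2 * (x - y)) ^ 2 := by
    rw [discrim]
    linear_combination (-4 * q.coeff 2) * hx + (q.coeff 1 + 3 * q.coeff 2 * x - q.coeff 2 * y) * hb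
  rw [hdisc]
  exact pow_two_pos_of_ne_zero (mul_ne_zero ha (sub_ne_zero.2 hxy))

end Field

theorem Splits.derivative {p : ℝ[X]} (hp : p.Splits) : p.derivative.Splits := by
  rw [splits_iff_card_roots] at hp ⊢
  have := p.card_roots_le_derivative
  have := p.natDegree_derivative_le
  have := p.derivative.card_roots'
  omega

theorem two_le_card_roots_toFinset_derivative {p : ℝ[X]} (hp : p.Splits)
    (hdeg : 3 ≤ p.natDegree) (h2 : 2 ≤ #p.roots.toFinset) :
    2 ≤ #p.derivative.roots.toFinset := by
  have hRolle := p.card_roots_toFinset_le_card_roots_derivative_sdiff_roots_succ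
  by_cases h3 : 3 ≤ #p.roots.toFinset
  · calc 2 ≤ #(p.derivative.roots.toFinset \ p.roots.toFinset) := by omega
      _ ≤ _ := card_le_card sdiff_subset
  obtain ⟨y, hy⟩ : (p.derivative.roots.toFinset \ p.roots.toFinset).Nonempty :=
    card_pos.1 (by omega)
  rw [mem_sdiff] at hy
  -- with only two distinct roots, `p` has a multiple root, which is also a root of `p'`
  obtain ⟨x, hx⟩ : ∃ x, 1 < p.roots.count x := by
    have : ¬ p.roots.Nodup := fun hnd => by
      have := Multiset.toFinset_card_of_nodup hnd
      rw [splits_iff_card_roots.1 hp] at this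
      omega
    simpa [Multiset.nodup_iff_count_le_one] using this
  have hp0 : p ≠ 0 := by rintro rfl; simp at hdeg
  have hx' : x ∈ p.roots.toFinset := Multiset.mem_toFinset.2 (Multiset.count_pos.1 (by omega))
  have hxroot := ((one_lt_rootMultiplicity_iff_isRoot hp0).1 (count_roots p ▸ hx)).2
  have hd0 : p.derivative ≠ 0 := (mem_roots'.1 (Multiset.mem_toFinset.1 hy.1)).1
  refine one_lt_card.2 ⟨x, ?_, y, hy.1, fun hxy => hy.2 (hxy ▸ hx')⟩
  rw [Multiset.mem_toFinset, mem_roots hd0]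
  exact hxroot

theorem splits_iterate_derivative {p : ℝ[X]} (hp : p.Splits) (h2 : 2 ≤ #p.roots.toFinset)
    {t : ℕ} (ht : t + 2 ≤ p.natDegree) :
    (derivative^[t] p).Splits ∧ 2 ≤ #(derivative^[t] p).roots.toFinset ∧
      (derivative^[t] p).natDegree = p.natDegree - t := by
  induction t with
  | zero => exact ⟨hp, h2, rfl⟩
  | succ t ih =>
    obtain ⟨hs, h2', hdeg⟩ := ih (by omega)
    rw [Function.iterate_succ_apply']
    exact ⟨hs.derivative, two_le_card_roots_toFinset_derivative hs (by omega) h2',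
      by rw [natDegree_derivative, hdeg]; omega⟩

theorem coeff_div_choose_mul_lt_sq {p : ℝ[X]} (hp : p.Splits) (h2 : 2 ≤ #p.roots.toFinset)
    {i : ℕ} (hi : i + 2 ≤ p.natDegree) (hi0 : p.coeff i ≠ 0) :
    p.coeff i / p.natDegree.choose i * (p.coeff (i + 2) / p.natDegree.choose (i + 2))
      < (p.coeff (i + 1) / p.natDegree.choose (i + 1)) ^ 2 := by
  obtain ⟨M, hM⟩ : ∃ M, p.natDegree = M + 2 + i := ⟨p.natDegree - i - 2, by omega⟩
  obtain ⟨hRs, hR2, hRdeg⟩ := splits_iterate_derivative hp h2 hi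
  set R := derivative^[i] p
  replace hRdeg : R.natDegree = M + 2 := by omega
  have hR0 : R.coeff 0 ≠ 0 := by
    simpa [R, coeff_iterate_derivative, Nat.descFactorial_self, Nat.factorial_ne_zero] using hi0
  have hTdeg : R.reverse.natDegree = M + 2 := by
    rw [reverse_natDegree, natTrailingDegree_eq_zero.2 (Or.inr hR0), hRdeg, Nat.sub_zero]
  obtain ⟨-, hU2, hUdeg⟩ := splits_iterate_derivative (t := M) hRs.reverse
    (two_le_card_roots_toFinset_reverse hR0 hR2) (by omega)
  set U := derivative^[M] R.reverse
  replace hUdeg : U.natDegree = 2 := by omega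
  -- Divided by binomial coefficients, the coefficients are shifted by differentiation and
  -- reversed by reversal.
  set c : ℝ := (M + 2).descFactorial M * (M + 2 + i).descFactorial i
  have hcoeff (j : ℕ) (hj : j ≤ 2) :
      U.coeff j / (2 : ℕ).choose j
        = c * (p.coeff (2 - j + i) / p.natDegree.choose (2 - j + i)) := by
    have hT : R.reverse.coeff (j + M) / (M + 2).choose (j + M)
        = R.coeff (2 - j) / (M + 2).choose (2 - j) := by
      have := coeff_reverse_div_choose R (j := j + M) (by omega)
      rwa [hRdeg, show M + 2 - (j + M) = 2 - j by omega] at this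
    rw [coeff_iterate_derivative_div_choose, add_comm 2 M, hT, coeff_iterate_derivative_div_choose,
      hM]
    ring
  have hc : 0 < c := by
    have h1 := Nat.descFactorial_pos.2 (show M ≤ M + 2 by omega)
    have h2 := Nat.descFactorial_pos.2 (show i ≤ M + 2 + i by omega)
    positivity
  have hU0 := hcoeff 0 (by norm_num)
  have hU1 := hcoeff 1 (by norm_num)
  have hU2' := hcoeff 2 (by norm_num)
  norm_num [add_comm _ i] at hU0 hU1 hU2'
  rw [div_eq_iff two_ne_zero] at hU1
  have hdisc := discrim_pos_of_two_le_card_roots hUdeg hU2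
  rw [discrim, hU0, hU1, hU2'] at hdisc
  have : 0 < (2 * c) ^ 2 * ((p.coeff (i + 1) / p.natDegree.choose (i + 1)) ^ 2
      - p.coeff i / p.natDegree.choose i * (p.coeff (i + 2) / p.natDegree.choose (i + 2))) := by
    linear_combination hdisc
  linarith [pos_of_mul_pos_right this (by positivity)]

end Polynomial

theorem esymm_eq_zero_of_lt {n j : ℕ} (lam : Fin n → ℝ) (h : n < j) : esymm j lam = 0 := by
  rw [esymm, esymmOn, powersetCard_eq_empty.2 (by simpa using h), sum_empty]

theorem esymm_zero {n : ℕ} (lam : Fin n → ℝ) : esymm 0 lam = 1 := by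
  simp [esymm, esymmOn]

theorem esymm_const (n j : ℕ) (c : ℝ) : esymm j (fun _ : Fin n => c) = n.choose j * c ^ j := by
  rw [esymm, esymmOn, sum_congr rfl fun S hS => by rw [prod_const, (mem_powersetCard.1 hS).2]]
  simp

theorem coeff_prod_X_add_C_eq_esymm {n j : ℕ} (lam : Fin n → ℝ) (hj : j ≤ n) :
    (∏ i, (X + C (lam i))).coeff j = esymm (n - j) lam := by
  rw [prod_X_add_C_coeff _ _ (by simpa using hj)]
  simp [esymm, esymmOn]

theorem esymm_div_choose_mul_lt_sq {n m : ℕ} (lam : Fin n → ℝ) (hm : m + 2 ≤ n)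
    (hσ : esymm (m + 2) lam ≠ 0) {i j : Fin n} (hij : lam i ≠ lam j) :
    esymm m lam / n.choose m * (esymm (m + 2) lam / n.choose (m + 2))
      < (esymm (m + 1) lam / n.choose (m + 1)) ^ 2 := by
  set Q : ℝ[X] := ∏ k, (X + C (lam k))
  have hmonic : ∀ k ∈ univ, (X + C (lam k)).Monic := fun k _ => monic_X_add_C _
  have hQdeg : Q.natDegree = n := by simp [Q, natDegree_prod_of_monic _ _ hmonic]
  have hroot (k : Fin n) : -lam k ∈ Q.roots.toFinset := by
    rw [Multiset.mem_toFinset, mem_roots (monic_prod_of_monic _ _ hmonic).ne_zero, IsRoot,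
      eval_prod]
    exact prod_eq_zero (mem_univ k) (by simp)
  have hQ2 : 2 ≤ #Q.roots.toFinset :=
    one_lt_card.2 ⟨_, hroot i, _, hroot j, by simpa using hij⟩
  have hcoeff (t : ℕ) (ht : t ≤ n) :
      Q.coeff t / n.choose t = esymm (n - t) lam / n.choose (n - t) := by
    rw [coeff_prod_X_add_C_eq_esymm lam ht, Nat.choose_symm ht]
  have hNewton := coeff_div_choose_mul_lt_sq (p := Q) (Splits.prod fun k _ => Splits.X_add_C _)
    hQ2 (i := n - (m + 2)) (by omega)
    (by rwa [coeff_prod_X_add_C_eq_esymm lam (by omega), Nat.sub_sub_self hm])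
  rw [hQdeg, hcoeff _ (by omega), hcoeff _ (by omega), hcoeff _ (by omega),
    Nat.sub_sub_self hm, show n - (n - (m + 2) + 1) = m + 1 by omega,
    show n - (n - (m + 2) + 2) = m by omega] at hNewton
  linarith

theorem le_of_mem_gardingCone {n k : ℕ} {lam : Fin n → ℝ} (h : lam ∈ GardingCone n k)
    (hk : 1 ≤ k) : k ≤ n := by
  by_contra! hkn
  simpa [esymm_eq_zero_of_lt lam hkn] using h k hk le_rfl

theorem esymm_pos_of_mem_gardingCone {n k j : ℕ} {lam : Fin n → ℝ}
    (h : lam ∈ GardingCone n k) (hj : j ≤ k) : 0 < esymm j lam := by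
  rcases j.eq_zero_or_pos with rfl | hj0
  · simp [esymm_zero]
  · exact h j hj0 hj

noncomputable def chordSlope (f : ℕ → ℝ) (a b : ℕ) : ℝ := (f b - f a) / ((b : ℝ) - a)

section ChordSlope

variable {f : ℕ → ℝ} {K : ℕ}

theorem chordSlope_lt_chordSlope_of_lt
    (hf : ∀ j, j + 2 ≤ K → f (j + 2) - f (j + 1) < f (j + 1) - f j)
    {a b c : ℕ} (hab : a < b) (hbc : b < c) (hcK : c ≤ K) :
    chordSlope f b c < chordSlope f a c ∧ chordSlope f a c < chordSlope f a b := by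
  have hanti : StrictAntiOn (fun j => f (j + 1) - f j) (Set.Iic (K - 1)) :=
    strictAntiOn_Iic_of_succ_lt fun m hm => hf m (by omega)
  -- the increments on `[a, b)` exceed `t`, those on `[b, c)` do not
  set t := f (b + 1) - f b
  have hleft : ((b : ℝ) - a) * t < f b - f a := by
    have := sum_lt_sum_of_nonempty (nonempty_Ico.2 hab) (f := fun _ => t) fun j hj => by
      have hj := mem_Ico.1 hj
      exact hanti (Set.mem_Iic.2 (by omega)) (Set.mem_Iic.2 (by omega)) hj.2
    rwa [sum_Ico_sub _ hab.le, sum_const, Nat.card_Ico, nsmul_eq_mul,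
      Nat.cast_sub hab.le] at this
  have hright : f c - f b ≤ ((c : ℝ) - b) * t := by
    have := sum_le_sum (s := Ico b c) (g := fun _ => t) fun j hj => by
      have hj := mem_Ico.1 hj
      exact hanti.antitoneOn (Set.mem_Iic.2 (by omega)) (Set.mem_Iic.2 (by omega)) hj.1
    rwa [sum_Ico_sub _ hbc.le, sum_const, Nat.card_Ico, nsmul_eq_mul,
      Nat.cast_sub hbc.le] at this
  have hab' : (0 : ℝ) < b - a := sub_pos.2 (by exact_mod_cast hab)
  have hbc' : (0 : ℝ) < c - b := sub_pos.2 (by exact_mod_cast hbc)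
  unfold chordSlope
  constructor
  · rw [div_lt_div_iff₀ hbc' (by linarith)]
    nlinarith [mul_le_mul_of_nonneg_left hright hab'.le, mul_lt_mul_of_pos_left hleft hbc']
  · rw [div_lt_div_iff₀ (by linarith) hab']
    nlinarith [mul_le_mul_of_nonneg_left hright hab'.le, mul_lt_mul_of_pos_left hleft hbc']

theorem chordSlope_lt_chordSlope
    (hf : ∀ j, j + 2 ≤ K → f (j + 2) - f (j + 1) < f (j + 1) - f j)
    {k l r s : ℕ} (hlk : l < k) (hsr : s < r) (hrk : r ≤ k) (hsl : s ≤ l) (hkK : k ≤ K)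
    (hne : (k, l) ≠ (r, s)) : chordSlope f l k < chordSlope f s r := by
  rcases hsl.lt_or_eq with hsl | rfl
  · calc chordSlope f l k < chordSlope f s k := (chordSlope_lt_chordSlope_of_lt hf hsl hlk hkK).1
      _ ≤ chordSlope f s r := by
        rcases hrk.lt_or_eq with hrk | rfl
        · exact (chordSlope_lt_chordSlope_of_lt hf hsr hrk hkK).2.le
        · rfl
  · have hrk : r < k := hrk.lt_of_ne fun h => hne (by rw [h])
    exact (chordSlope_lt_chordSlope_of_lt hf hsr hrk hkK).2

end ChordSlope

theorem log_rpow_div_eq_chordSlope {x : ℕ → ℝ} {K L : ℕ} (hK : 0 < x K) (hL : 0 < x L) :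
    Real.log ((x K / x L) ^ ((1 : ℝ) / ((K : ℝ) - (L : ℝ))))
      = chordSlope (Real.log ∘ x) L K := by
  rw [Real.log_rpow (div_pos hK hL), Real.log_div hK.ne' hL.ne', chordSlope, one_div_mul_eq_div]
  rfl

theorem generalized_newton_maclaurin_lt {n k l r s : ℕ} {lam : Fin n → ℝ}
    (hGamma : lam ∈ GardingCone n k) (hkl : k > l) (hrs : r > s) (hkr : k ≥ r) (hls : l ≥ s)
    (hne : (k, l) ≠ (r, s)) {i j : Fin n} (hij : lam i ≠ lam j) :
    ((esymm k lam / (n.choose k : ℝ)) / (esymm l lam / (n.choose l : ℝ)))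
        ^ ((1 : ℝ) / ((k : ℝ) - (l : ℝ))) <
      ((esymm r lam / (n.choose r : ℝ)) / (esymm s lam / (n.choose s : ℝ)))
        ^ ((1 : ℝ) / ((r : ℝ) - (s : ℝ))) := by
  have hkn := le_of_mem_gardingCone hGamma (by omega)
  set E : ℕ → ℝ := fun j => esymm j lam / n.choose j
  have hE (j : ℕ) (hj : j ≤ k) : 0 < E j :=
    div_pos (esymm_pos_of_mem_gardingCone hGamma hj) (by exact_mod_cast Nat.choose_pos (by omega))
  have hconcave (t : ℕ) (ht : t + 2 ≤ k) :
      (Real.log ∘ E) (t + 2) - (Real.log ∘ E) (t + 1)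
        < (Real.log ∘ E) (t + 1) - (Real.log ∘ E) t := by
    have hNewton := Real.log_lt_log (mul_pos (hE t (by omega)) (hE (t + 2) ht))
      (esymm_div_choose_mul_lt_sq lam (by omega)
        (esymm_pos_of_mem_gardingCone hGamma ht).ne' hij)
    rw [Real.log_mul (hE t (by omega)).ne' (hE (t + 2) ht).ne', Real.log_pow] at hNewton
    simp only [Function.comp_apply]
    push_cast at hNewton
    linarith
  rw [← Real.log_lt_log_iff (by have := hE k le_rfl; have := hE l hkl.le; positivity)
      (by have := hE r hkr; have := hE s (by omega); positivity),
    log_rpow_div_eq_chordSlope (hE k le_rfl) (hE l hkl.le),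
    log_rpow_div_eq_chordSlope (hE r hkr) (hE s (by omega))]
  exact chordSlope_lt_chordSlope hconcave hkl hrs hkr hls le_rfl hne

theorem esymm_ratio_rpow_const {n K L : ℕ} {c : ℝ} (hc : 0 < c) (hLK : L < K) (hKn : K ≤ n) :
    ((esymm K (fun _ : Fin n => c) / (n.choose K : ℝ))
        / (esymm L (fun _ : Fin n => c) / (n.choose L : ℝ)))
      ^ ((1 : ℝ) / ((K : ℝ) - (L : ℝ))) = c := by
  have hK : (n.choose K : ℝ) ≠ 0 := by exact_mod_cast (Nat.choose_pos hKn).ne'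
  have hL : (n.choose L : ℝ) ≠ 0 := by exact_mod_cast (Nat.choose_pos (by omega)).ne'
  have hKL : (K : ℝ) - L ≠ 0 := sub_ne_zero.2 (by exact_mod_cast hLK.ne')
  rw [esymm_const, esymm_const, mul_div_cancel_left₀ _ hK, mul_div_cancel_left₀ _ hL,
    div_eq_mul_inv, ← pow_sub₀ c hc.ne' hLK.le, ← Real.rpow_natCast, ← Real.rpow_mul hc.le,
    Nat.cast_sub hLK.le, mul_one_div_cancel hKL, Real.rpow_one]

theorem generalized_newton_maclaurin_eq_iff (n k l r s : ℕ)
    (lam : Fin n → ℝ) (hGamma : lam ∈ GardingCone n k)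
    (hkl : k > l) (hrs : r > s) (hkr : k ≥ r) (hls : l ≥ s) (hne : (k, l) ≠ (r, s)) :
    ((esymm k lam / (n.choose k : ℝ)) / (esymm l lam / (n.choose l : ℝ)))
        ^ ((1 : ℝ) / ((k : ℝ) - (l : ℝ))) =
      ((esymm r lam / (n.choose r : ℝ)) / (esymm s lam / (n.choose s : ℝ)))
        ^ ((1 : ℝ) / ((r : ℝ) - (s : ℝ))) ↔
      ∃ c : ℝ, 0 < c ∧ ∀ i : Fin n, lam i = c := by
  have hkn := le_of_mem_gardingCone hGamma (by omega)
  constructor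
  · intro heq
    by_cases hconst : ∃ i j, lam i ≠ lam j
    · obtain ⟨i, j, hij⟩ := hconst
      exact absurd heq (generalized_newton_maclaurin_lt hGamma hkl hrs hkr hls hne hij).ne
    obtain ⟨c, rfl⟩ : ∃ c, lam = fun _ => c :=
      ⟨lam ⟨0, by omega⟩, funext fun i => by_contra fun h => hconst ⟨i, _, h⟩⟩
    have hσ₁ := esymm_pos_of_mem_gardingCone hGamma (j := 1) (by omega)
    rw [esymm_const, pow_one] at hσ₁
    exact ⟨c, pos_of_mul_pos_right hσ₁ (Nat.cast_nonneg _), fun _ => rfl⟩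
  · rintro ⟨c, hc, hlam⟩
    obtain rfl : lam = fun _ => c := funext hlam
    rw [esymm_ratio_rpow_const hc hkl hkn, esymm_ratio_rpow_const hc hrs (hkr.trans hkn)]
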